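/- Let H1 = (1/4)(σx⊗σx + σy⊗σy + σz⊗σz) be the isotropic (Heisenberg) exchange Hamiltonian. Then for t ∈ ℝ, the gate exp(iH1 t) is a perfect entangler if and only if t ≡ π/2 (mod π); i.e., the only perfect entanglers generated directly by H1 are those in the local equivalence classes of √SWAP and its inverse. -/

import Mathlib

open Matrix Complex

noncomputable section

/-- Pauli matrix σx. -/
def sigmaX : Matrix (Fin 2) (Fin 2) ℂ := !![0, 1; 1, 0]
/-- Pauli matrix σy. -/
def sigmaY : Matrix (Fin 2) (Fin 2) ℂ := !![0, -I; I, 0]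
/-- Pauli matrix σz. -/
def sigmaZ : Matrix (Fin 2) (Fin 2) ℂ := !![1, 0; 0, -1]

/-- Kronecker product of two 2×2 complex matrices, as a 4×4 matrix
(row-major ordering: entry ((2i+k),(2j+l)) is `A i j * B k l`). -/
def kron (A B : Matrix (Fin 2) (Fin 2) ℂ) : Matrix (Fin 4) (Fin 4) ℂ :=
  Matrix.of fun i j =>
    A ⟨i.val / 2, by have := i.isLt; omega⟩ ⟨j.val / 2, by have := j.isLt; omega⟩ *
    B ⟨i.val % 2, by have := i.isLt; omega⟩ ⟨j.val % 2, by have := j.isLt; omega⟩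

/-- The matrix P = -(1/2) σy⊗σy. -/
def Pmat : Matrix (Fin 4) (Fin 4) ℂ := (-(1/2) : ℂ) • kron sigmaY sigmaY

/-- Ent ψ = ψᵀ P ψ. -/
def Ent (ψ : Fin 4 → ℂ) : ℂ := ∑ i, ∑ j, ψ i * Pmat i j * ψ j

/-- A 4×4 unitary U is a perfect entangler if some unit vector ψ with Ent ψ = 0
satisfies |Ent (Uψ)| = 1/2. -/
def PerfectEntangler (U : Matrix (Fin 4) (Fin 4) ℂ) : Prop :=
  ∃ ψ : Fin 4 → ℂ, (∑ i, ‖ψ i‖ ^ 2) = 1 ∧ Ent ψ = 0 ∧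
    ‖Ent (U.mulVec ψ)‖ = 1 / 2

/-- The isotropic (Heisenberg) exchange Hamiltonian. -/
def H1 : Matrix (Fin 4) (Fin 4) ℂ :=
  (1 / 4 : ℂ) • (kron sigmaX sigmaX + kron sigmaY sigmaY + kron sigmaZ sigmaZ)

/- ### Auxiliary material -/

lemma fv0 : ((0:Fin 4):ℕ) = 0 := rfl
lemma fv1 : ((1:Fin 4):ℕ) = 1 := rfl
lemma fv2 : ((2:Fin 4):ℕ) = 2 := rfl
lemma fv3 : ((3:Fin 4):ℕ) = 3 := rfl

lemma H1_eq : H1 = !![1/4,0,0,0; 0,-(1/4),1/2,0; 0,1/2,-(1/4),0; 0,0,0,1/4] := by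
  ext i j
  fin_cases i <;> fin_cases j <;>
    · simp [H1, kron, sigmaX, sigmaY, sigmaZ, fv0, fv1, fv2, fv3,
        Matrix.vecHead, Matrix.vecTail]
      try norm_num

/-- The change-of-basis matrix. -/
def Cm : Matrix (Fin 4) (Fin 4) ℂ := !![1,0,0,0; 0,1,1,0; 0,1,-1,0; 0,0,0,1]
/-- Its inverse. -/
def Cw : Matrix (Fin 4) (Fin 4) ℂ := !![1,0,0,0; 0,1/2,1/2,0; 0,1/2,-(1/2),0; 0,0,0,1]

lemma hCCw : Cm * Cw = 1 := by
  ext i j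
  fin_cases i <;> fin_cases j <;>
    · simp [Cm, Cw, Matrix.mul_apply, Fin.sum_univ_four, Matrix.one_apply,
        Matrix.vecHead, Matrix.vecTail]
      try norm_num

lemma hCwC : Cw * Cm = 1 := by
  ext i j
  fin_cases i <;> fin_cases j <;>
    · simp [Cm, Cw, Matrix.mul_apply, Fin.sum_univ_four, Matrix.one_apply,
        Matrix.vecHead, Matrix.vecTail]
      try norm_num

lemma hdiag (t : ℝ) :
    I • ((t : ℂ) • H1) =
      Cm * Matrix.diagonal ![I*t/4, I*t/4, -(3*I*t/4), I*t/4] * Cw := by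
  rw [H1_eq]
  ext i j
  fin_cases i <;> fin_cases j <;>
    · simp [Cm, Cw, Matrix.mul_apply, Fin.sum_univ_four, Matrix.diagonal,
        Matrix.vecHead, Matrix.vecTail]
      try ring

/-- `Cm` as a unit. -/
def CU : (Matrix (Fin 4) (Fin 4) ℂ)ˣ := ⟨Cm, Cw, hCCw, hCwC⟩

/-- The explicit time-evolution matrix. -/
def Ut (t : ℝ) : Matrix (Fin 4) (Fin 4) ℂ :=
  let u := Complex.exp (I*t/4); let v := Complex.exp (-(3*I*t/4))
  !![u,0,0,0; 0,(u+v)/2,(u-v)/2,0; 0,(u-v)/2,(u+v)/2,0; 0,0,0,u]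

lemma exp_eq (t : ℝ) :
    NormedSpace.exp (I • ((t : ℂ) • H1)) = Ut t := by
  rw [hdiag t]
  have h : (Cm : Matrix (Fin 4) (Fin 4) ℂ) = (CU : Matrix (Fin 4) (Fin 4) ℂ) := rfl
  have h2 : (Cw : Matrix (Fin 4) (Fin 4) ℂ)
      = ((CU⁻¹ : (Matrix (Fin 4) (Fin 4) ℂ)ˣ) : Matrix (Fin 4) (Fin 4) ℂ) := rfl
  rw [h, h2, Matrix.exp_units_conj, Matrix.exp_diagonal]
  have hv : (NormedSpace.exp (![I*t/4, I*t/4, -(3*I*t/4), I*t/4] : Fin 4 → ℂ))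
      = ![Complex.exp (I*t/4), Complex.exp (I*t/4),
          Complex.exp (-(3*I*t/4)), Complex.exp (I*t/4)] := by
    funext i
    fin_cases i <;>
      simp [Pi.exp_def, ← Complex.exp_eq_exp_ℂ, Matrix.vecHead, Matrix.vecTail]
  rw [hv, ← h, ← h2]
  ext i j
  fin_cases i <;> fin_cases j <;>
    · simp [Cm, Cw, Ut, Matrix.mul_apply, Fin.sum_univ_four, Matrix.diagonal,
        Matrix.vecHead, Matrix.vecTail]
      try ring

lemma Ent_eq (ψ : Fin 4 → ℂ) : Ent ψ = ψ 0 * ψ 3 - ψ 1 * ψ 2 := by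
  simp [Ent, Pmat, kron, sigmaY, Fin.sum_univ_four, fv0, fv1, fv2, fv3,
    Matrix.vecHead, Matrix.vecTail]
  ring

lemma EntU (t : ℝ) (ψ : Fin 4 → ℂ) :
    Ent ((Ut t).mulVec ψ) =
      (Complex.exp (I*t/4))^2 * Ent ψ +
        ((Complex.exp (-(3*I*t/4)))^2 - (Complex.exp (I*t/4))^2) * ((ψ 1 - ψ 2)/2)^2 := by
  rw [Ent_eq, Ent_eq]
  simp [Ut, Matrix.mulVec, dotProduct, Fin.sum_univ_four,
    Matrix.vecHead, Matrix.vecTail]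
  ring

lemma key_abs (t : ℝ) :
    ‖(Complex.exp (-(3*I*t/4)))^2 - (Complex.exp (I*t/4))^2‖
      = 2 * |Real.sin t| := by
  have h1 : (Complex.exp (-(3*I*t/4)))^2 = Complex.exp (-(I*t/2)) * Complex.exp ((-t : ℝ) * I) := by
    rw [sq, ← Complex.exp_add, ← Complex.exp_add]; push_cast; ring_nf
  have h2 : (Complex.exp (I*t/4))^2 = Complex.exp (-(I*t/2)) * Complex.exp ((t : ℝ) * I) := by
    rw [sq, ← Complex.exp_add, ← Complex.exp_add]; push_cast; ring_nf
  rw [h1, h2, ← mul_sub, norm_mul]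
  have h3 : ‖Complex.exp (-(I*t/2))‖ = 1 := by
    rw [Complex.norm_exp]; simp
  have h4 : Complex.exp ((-t : ℝ) * I) - Complex.exp ((t : ℝ) * I)
      = -(2 * Real.sin t) * I := by
    rw [Complex.exp_mul_I, Complex.exp_mul_I]
    push_cast
    rw [Complex.cos_neg, Complex.sin_neg, ← Complex.ofReal_sin]
    ring
  rw [h3, h4, one_mul]
  rw [norm_mul, Complex.norm_I, mul_one]
  have h5 : (-(2 * ((Real.sin t : ℝ) : ℂ))) = ((-(2 * Real.sin t) : ℝ) : ℂ) := by
    push_cast; ring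
  rw [h5, Complex.norm_real, Real.norm_eq_abs, abs_neg, abs_mul]; norm_num

lemma abs_sub_sq_le (ψ : Fin 4 → ℂ) (hn : (∑ i, ‖ψ i‖ ^ 2) = 1)
    (h0 : Ent ψ = 0) : ‖ψ 1 - ψ 2‖ ^ 2 ≤ 1 := by
  rw [Ent_eq, sub_eq_zero] at h0
  have habs : ‖ψ 1‖ * ‖ψ 2‖
      = ‖ψ 0‖ * ‖ψ 3‖ := by
    rw [← norm_mul, ← norm_mul, h0]
  rw [Fin.sum_univ_four] at hn
  have htri : ‖ψ 1 - ψ 2‖ ≤ ‖ψ 1‖ + ‖ψ 2‖ := by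
    simpa [sub_eq_add_neg] using norm_add_le (ψ 1) (-(ψ 2))
  nlinarith [norm_nonneg (ψ 0), norm_nonneg (ψ 1),
    norm_nonneg (ψ 2), norm_nonneg (ψ 3),
    norm_nonneg (ψ 1 - ψ 2),
    sq_nonneg (‖ψ 0‖ - ‖ψ 3‖)]

/-- exp(iH1 t) is a perfect entangler iff t ≡ π/2 (mod π). -/
theorem heisenberg_perfect_entangler_iff (t : ℝ) :
    PerfectEntangler (NormedSpace.exp (I • ((t : ℂ) • H1))) ↔
      ∃ k : ℤ, t = Real.pi / 2 + k * Real.pi := by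
  constructor
  · rintro ⟨ψ, hn, h0, habs⟩
    rw [exp_eq, EntU, h0, mul_zero, zero_add, norm_mul, key_abs, norm_pow,
      norm_div] at habs
    have h2 : ‖(2:ℂ)‖ = 2 := by norm_num
    rw [h2] at habs
    have hb := abs_sub_sq_le ψ hn h0
    have hs1 : |Real.sin t| ≤ 1 := abs_le.mpr ⟨Real.neg_one_le_sin t, Real.sin_le_one t⟩
    have hs : |Real.sin t| = 1 := by
      have h3 : ‖ψ 1 - ψ 2‖ ≥ 0 := norm_nonneg _
      nlinarith [habs, hb, hs1, abs_nonneg (Real.sin t)]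
    have hc : Real.cos t = 0 := by
      have h4 : Real.cos t ^ 2 = 0 := by
        nlinarith [Real.sin_sq_add_cos_sq t, _root_.sq_abs (Real.sin t)]
      exact pow_eq_zero_iff two_ne_zero |>.mp h4
    obtain ⟨k, hk⟩ := Real.cos_eq_zero_iff.mp hc
    exact ⟨k, by rw [hk]; push_cast; ring⟩
  · rintro ⟨k, rfl⟩
    refine ⟨![1/2, 1/2, -(1/2), -(1/2)], ?_, ?_, ?_⟩
    · rw [Fin.sum_univ_four]
      norm_num [Matrix.cons_val_two, Matrix.cons_val_three]
    · rw [Ent_eq]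
      norm_num [Matrix.cons_val_two, Matrix.cons_val_three]
    · rw [exp_eq, EntU, Ent_eq]
      have hψ : ((![1/2, 1/2, -(1/2), -(1/2)] : Fin 4 → ℂ) 1
          - (![1/2, 1/2, -(1/2), -(1/2)] : Fin 4 → ℂ) 2) = 1 := by norm_num [Matrix.cons_val_two, Matrix.cons_val_three]
      have hE : ((![1/2, 1/2, -(1/2), -(1/2)] : Fin 4 → ℂ) 0
            * (![1/2, 1/2, -(1/2), -(1/2)] : Fin 4 → ℂ) 3
          - (![1/2, 1/2, -(1/2), -(1/2)] : Fin 4 → ℂ) 1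
            * (![1/2, 1/2, -(1/2), -(1/2)] : Fin 4 → ℂ) 2) = 0 := by norm_num [Matrix.cons_val_two, Matrix.cons_val_three]
      rw [hψ, hE, mul_zero, zero_add, norm_mul, key_abs]
      have hsin : Real.sin (Real.pi / 2 + k * Real.pi) = Real.cos (k * Real.pi) := by
        rw [Real.sin_add]
        simp
      rw [hsin, Real.abs_cos_int_mul_pi]
      norm_num

end
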